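/- Let N_n be the n-point sample clouds from a random vector X on ℝ^d, and assume N_n converges in probability, as n → ∞, onto a limit set G = {x ∈ ℝ^d : g(x) ≤ 1} for a gauge function g. Let I_m ⊂ {1,…,d} be an index set with |I_m| = m, and let X̃ = (X_i)_{i∈I_m} be the corresponding m-dimensional marginal of X. Then the sample clouds from X̃, with the same scaling constants, converge in probability onto the limit set G̃ = P_m(G) = {y ∈ ℝ^m : g̃(y) ≤ 1}, where P_m is the coordinate projection onto the coordinates indexed by I_m and g̃(y) = min over the variables {x_i : i ∈ {1,…,d} \ I_m} of g(x), with y = (x_i)_{i∈I_m}. -/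

import Mathlib

open MeasureTheory Filter Topology ProbabilityTheory

/-- The `n`-point sample cloud `{X 1 / r n, …, X n / r n}` of the scaled observations. -/
def sampleCloud {Ω ι : Type*} (X : ℕ → Ω → (ι → ℝ)) (r : ℕ → ℝ)
    (n : ℕ) (ω : Ω) : Set (ι → ℝ) :=
  {y | ∃ i, 1 ≤ i ∧ i ≤ n ∧ y = (r n)⁻¹ • X i ω}

/-- Convergence in probability of random sets onto a deterministic set `G`, in the sense that
the Hausdorff distance to `G` tends to `0` in probability. -/
def ConvInProbOnto {Ω ι : Type*} [MeasurableSpace Ω] [Fintype ι] (μ : Measure Ω)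
    (N : ℕ → Ω → Set (ι → ℝ)) (G : Set (ι → ℝ)) : Prop :=
  ∀ ε : ℝ, 0 < ε →
    Tendsto (fun n => μ {ω | ε < Metric.hausdorffDist (N n ω) G}) atTop (𝓝 0)

/-!
The coordinate projection `P` is `1`-Lipschitz for the sup norm, so it does not increase
Hausdorff distances and the projected clouds `P '' N_n` stay at least as close to `P '' G`
as `N_n` is to `G`. For the description of `P '' G`: if the infimum of `g` over the fibre of
`y` is at most `1`, then by homogeneity `t⁻¹ • y ∈ P '' G` for all `t > 1`, and `P '' G` is
compact, hence closed.
-/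

open Metric Bornology
open scoped NNReal ENNReal

namespace LipschitzWith

variable {α β : Type*}

theorem infEDist_image_le [PseudoEMetricSpace α] [PseudoEMetricSpace β] {K : ℝ≥0} {f : α → β}
    (hf : LipschitzWith K f) (hK : K ≠ 0) (x : α) (t : Set α) :
    infEDist (f x) (f '' t) ≤ K * infEDist x t := by
  simp only [infEDist, iInf_image,
    ENNReal.mul_iInf_of_ne (ENNReal.coe_ne_zero.2 hK) ENNReal.coe_ne_top]
  exact iInf₂_mono fun y _ => hf x y

theorem hausdorffEDist_image_le [PseudoEMetricSpace α] [PseudoEMetricSpace β] {K : ℝ≥0}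
    {f : α → β} (hf : LipschitzWith K f) (hK : K ≠ 0) (s t : Set α) :
    hausdorffEDist (f '' s) (f '' t) ≤ K * hausdorffEDist s t := by
  refine hausdorffEDist_le_of_infEDist ?_ ?_ <;> rintro _ ⟨x, hx, rfl⟩
  · exact (hf.infEDist_image_le hK x t).trans
      (mul_le_mul_right (infEDist_le_hausdorffEDist_of_mem hx) _)
  · rw [hausdorffEDist_comm]
    exact (hf.infEDist_image_le hK x s).trans
      (mul_le_mul_right (infEDist_le_hausdorffEDist_of_mem hx) _)

theorem hausdorffDist_image_le [PseudoMetricSpace α] [PseudoMetricSpace β] {K : ℝ≥0}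
    {f : α → β} (hf : LipschitzWith K f) (hK : K ≠ 0) {s t : Set α}
    (hst : hausdorffEDist s t ≠ ⊤) :
    hausdorffDist (f '' s) (f '' t) ≤ K * hausdorffDist s t := by
  simpa only [hausdorffDist, ENNReal.toReal_mul, ENNReal.coe_toReal] using
    ENNReal.toReal_mono (ENNReal.mul_ne_top ENNReal.coe_ne_top hst)
      (hf.hausdorffEDist_image_le hK s t)

end LipschitzWith

theorem lipschitzWith_one_comp_right {ι κ β : Type*} [Fintype ι] [Fintype κ]
    [PseudoEMetricSpace β] (e : κ → ι) : LipschitzWith 1 fun x : ι → β => x ∘ e :=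
  LipschitzWith.of_edist_le fun x y => edist_pi_le_iff.2 fun k => edist_le_pi_edist x y (e k)

section SampleCloud

variable {Ω ι κ : Type*}

theorem sampleCloud_finite (X : ℕ → Ω → (ι → ℝ)) (r : ℕ → ℝ) (n : ℕ) (ω : Ω) :
    (sampleCloud X r n ω).Finite := by
  refine ((Set.finite_Icc 1 n).image fun i => (r n)⁻¹ • X i ω).subset ?_
  rintro _ ⟨i, h1, hn, rfl⟩
  exact ⟨i, ⟨h1, hn⟩, rfl⟩

theorem sampleCloud_map (X : ℕ → Ω → (ι → ℝ)) (r : ℕ → ℝ) {f : (ι → ℝ) → (κ → ℝ)}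
    (hf : ∀ (c : ℝ) x, f (c • x) = c • f x) (n : ℕ) (ω : Ω) :
    sampleCloud (fun n ω => f (X n ω)) r n ω = f '' sampleCloud X r n ω := by
  ext y
  constructor
  · rintro ⟨i, h1, hn, rfl⟩
    exact ⟨_, ⟨i, h1, hn, rfl⟩, hf _ _⟩
  · rintro ⟨_, ⟨i, h1, hn, rfl⟩, rfl⟩
    exact ⟨i, h1, hn, hf _ _⟩

end SampleCloud

theorem ConvInProbOnto.image {Ω ι κ : Type*} [MeasurableSpace Ω] [Fintype ι] [Fintype κ]
    {μ : Measure Ω} {N : ℕ → Ω → Set (ι → ℝ)} {G : Set (ι → ℝ)} (h : ConvInProbOnto μ N G)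
    (hN : ∀ n ω, IsBounded (N n ω)) (hGne : G.Nonempty) (hGb : IsBounded G)
    {K : ℝ≥0} {f : (ι → ℝ) → (κ → ℝ)} (hf : LipschitzWith K f) (hK : K ≠ 0) :
    ConvInProbOnto μ (fun n ω => f '' N n ω) (f '' G) := by
  intro ε hε
  have hKpos : (0 : ℝ) < K := by positivity
  refine tendsto_of_tendsto_of_tendsto_of_le_of_le tendsto_const_nhds
    (h (ε / K) (div_pos hε hKpos)) (fun n => zero_le) fun n => measure_mono fun ω hω => ?_
  simp only [Set.mem_ofPred_eq] at hω ⊢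
  have hNne : (N n ω).Nonempty := by
    by_contra hN
    rw [Set.not_nonempty_iff_eq_empty.1 hN, Set.image_empty, hausdorffDist_empty'] at hω
    exact hε.not_gt hω
  rw [div_lt_iff₀ hKpos, mul_comm]
  exact hω.trans_le (hf.hausdorffDist_image_le hK
    (hausdorffEDist_ne_top_of_nonempty_of_bounded hNne hGne (hN n ω) hGb))

section PositivelyHomogeneous

variable {E : Type*} {g : E → ℝ}

theorem apply_zero_of_posHomogeneous [AddCommGroup E] [Module ℝ E]
    (hhom : ∀ t : ℝ, 0 < t → ∀ x, g (t • x) = t * g x) : g 0 = 0 := by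
  have h2 := hhom 2 two_pos 0
  rw [smul_zero] at h2
  linarith

theorem nonneg_of_posHomogeneous [NormedAddCommGroup E] [NormedSpace ℝ E]
    (hhom : ∀ t : ℝ, 0 < t → ∀ x, g (t • x) = t * g x) (hb : IsBounded {x | g x ≤ 1}) (x : E) :
    0 ≤ g x := by
  by_contra! hx
  have hx0 : x ≠ 0 := by
    rintro rfl
    exact hx.ne (apply_zero_of_posHomogeneous hhom)
  obtain ⟨R, hR⟩ := hb.exists_norm_le
  have ht : 0 < (|R| + 1) / ‖x‖ := by positivity
  have hmem := hR (((|R| + 1) / ‖x‖) • x) (by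
    rw [Set.mem_ofPred_eq, hhom _ ht]
    nlinarith)
  rw [norm_smul, Real.norm_of_nonneg ht.le, div_mul_cancel₀ _ (norm_ne_zero_iff.2 hx0)] at hmem
  linarith [le_abs_self R]

theorem image_sublevel_eq_setOf_sInf_le {F : Type*} [TopologicalSpace E] [AddCommGroup E]
    [Module ℝ E] [TopologicalSpace F] [AddCommGroup F] [Module ℝ F] [ContinuousSMul ℝ F]
    [T2Space F] {P : E → F} (hPc : Continuous P) (hP : ∀ (c : ℝ) x, P (c • x) = c • P x)
    (hPs : Function.Surjective P) (hhom : ∀ t : ℝ, 0 < t → ∀ x, g (t • x) = t * g x)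
    (hg : BddBelow (Set.range g)) (hG : IsCompact {x | g x ≤ 1}) :
    P '' {x | g x ≤ 1} = {y | sInf (g '' {x | P x = y}) ≤ 1} := by
  refine Set.Subset.antisymm ?_ fun y hy => ?_
  · rintro _ ⟨x, hx, rfl⟩
    have hfib : x ∈ {x' | P x' = P x} := rfl
    exact (csInf_le (hg.mono (Set.image_subset_range _ _)) ⟨x, hfib, rfl⟩).trans hx
  have hshrink : ∀ t > (1 : ℝ), t⁻¹ • y ∈ P '' {x | g x ≤ 1} := fun t ht => by
    obtain ⟨_, ⟨x, rfl, rfl⟩, hxt⟩ :=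
      exists_lt_of_csInf_lt ((show {x | P x = y}.Nonempty from hPs y).image g) (hy.trans_lt ht)
    have htpos : 0 < t⁻¹ := inv_pos.2 (one_pos.trans ht)
    refine ⟨t⁻¹ • x, ?_, hP _ _⟩
    rw [Set.mem_ofPred_eq, hhom _ htpos, inv_mul_le_one₀ (one_pos.trans ht)]
    exact hxt.le
  have hlim : Tendsto (fun t : ℝ => t⁻¹ • y) (𝓝[>] 1) (𝓝 y) := by
    have hcont : ContinuousAt (fun t : ℝ => t⁻¹ • y) 1 :=
      (continuousAt_inv₀ one_ne_zero).smul continuousAt_const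
    simpa using hcont.tendsto.mono_left nhdsWithin_le_nhds
  exact (hG.image hPc).isClosed.mem_of_tendsto hlim (eventually_nhdsWithin_of_forall hshrink)

end PositivelyHomogeneous

theorem marginal_limit_set_general
    {Ω : Type*} [MeasurableSpace Ω] (μ : Measure Ω)
    {d : ℕ} (X : ℕ → Ω → (Fin d → ℝ))
    -- gauge function and compact limit set
    (g : (Fin d → ℝ) → ℝ)
    (hghomog : ∀ t : ℝ, 0 < t → ∀ x, g (t • x) = t * g x)
    (G : Set (Fin d → ℝ)) (hG : G = {x | g x ≤ 1}) (hGcompact : IsCompact G)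
    -- convergence of the sample clouds onto G
    (r : ℕ → ℝ)
    (hconv : ConvInProbOnto μ (sampleCloud X r) G)
    -- the marginal index set
    (s : Finset (Fin d)) :
    ConvInProbOnto μ
      (sampleCloud (fun n ω (i : {i // i ∈ s}) => X n ω i.1) r)
      ((fun (x : Fin d → ℝ) (i : {i // i ∈ s}) => x i.1) '' G) ∧
    (fun (x : Fin d → ℝ) (i : {i // i ∈ s}) => x i.1) '' G =
      {y : {i // i ∈ s} → ℝ |
        sInf (g '' {x : Fin d → ℝ | ∀ i : {i // i ∈ s}, x i.1 = y i}) ≤ 1} := by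
  subst hG
  set P : (Fin d → ℝ) → ({i // i ∈ s} → ℝ) := fun x i => x i.1
  have hPlip : LipschitzWith 1 P := lipschitzWith_one_comp_right Subtype.val
  have hPsurj : Function.Surjective P := fun y =>
    ⟨Function.extend Subtype.val y 0, funext fun i => Subtype.val_injective.extend_apply y 0 i⟩
  have hG0 : (0 : Fin d → ℝ) ∈ {x | g x ≤ 1} := by
    simp [apply_zero_of_posHomogeneous hghomog]
  constructor
  · have hcloud :
        sampleCloud (fun n ω i => X n ω i.1) r = fun n ω => P '' sampleCloud X r n ω :=
      funext₂ (sampleCloud_map X r (f := P) fun _ _ => rfl)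
    rw [hcloud]
    exact hconv.image (fun n ω => (sampleCloud_finite X r n ω).isBounded) ⟨0, hG0⟩
      hGcompact.isBounded hPlip one_ne_zero
  · have hgnonneg := nonneg_of_posHomogeneous hghomog hGcompact.isBounded
    simp only [← funext_iff]
    exact image_sublevel_eq_setOf_sInf_le hPlip.continuous (fun _ _ => rfl) hPsurj hghomog
      ⟨0, Set.forall_mem_range.2 hgnonneg⟩ hGcompact

/-- Proposition 3 of the paper: if sample clouds from `X` converge in
probability onto the limit set `G = {x : g(x) ≤ 1}` of a gauge function `g`, then for any
index set `I_m ⊆ {1,…,d}` the sample clouds of the marginal vector `(Xᵢ)_{i ∈ I_m}`, with the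
same scaling, converge in probability onto `G̃ = P_m(G) = {y : g̃(y) ≤ 1}`, where `P_m` is the
coordinate projection and `g̃(y)` is the infimum of `g` over all completions of `y`. -/
theorem marginal_limit_set
    {Ω : Type*} [MeasurableSpace Ω] (μ : Measure Ω) [IsProbabilityMeasure μ]
    {d : ℕ} (X : ℕ → Ω → (Fin d → ℝ)) (hXmeas : ∀ i, Measurable (X i))
    -- i.i.d. copies
    (hindep : iIndepFun X μ)
    (hident : ∀ i, Measure.map (X i) μ = Measure.map (X 0) μ)
    -- gauge function and compact limit set
    (g : (Fin d → ℝ) → ℝ) (hgcont : Continuous g)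
    (hghomog : ∀ t : ℝ, 0 < t → ∀ x, g (t • x) = t * g x)
    (G : Set (Fin d → ℝ)) (hG : G = {x | g x ≤ 1}) (hGcompact : IsCompact G)
    -- convergence of the sample clouds onto G
    (r : ℕ → ℝ) (hr : Tendsto r atTop atTop)
    (hconv : ConvInProbOnto μ (sampleCloud X r) G)
    -- the marginal index set
    (s : Finset (Fin d)) :
    ConvInProbOnto μ
      (sampleCloud (fun n ω (i : {i // i ∈ s}) => X n ω i.1) r)
      ((fun (x : Fin d → ℝ) (i : {i // i ∈ s}) => x i.1) '' G) ∧
    (fun (x : Fin d → ℝ) (i : {i // i ∈ s}) => x i.1) '' G =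
      {y : {i // i ∈ s} → ℝ |
        sInf (g '' {x : Fin d → ℝ | ∀ i : {i // i ∈ s}, x i.1 = y i}) ≤ 1} :=
  marginal_limit_set_general μ X g hghomog G hG hGcompact r hconv s
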